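/- Conversely, glue conditions recover inhibition ordering: if for every edge e and every pair (a,b) ∈ glue(e) (defined via the inhibition predicate as all →c-pairs incident to inhibiting vertices) we have e ≤ a or b ≤ e, and every inhibiting vertex v of e has a unique incoming edge e' with e' →c v, then for all (v,e) ∈ Inh we have e ≤ v or v ≤ e. -/

import Mathlib

def lpoLe {O : Type} (rc ri : O → O → Prop) : O → O → Prop :=
  Relation.ReflTransGen (fun x y => rc x y ∨ ri x y)

def glueOf {O : Type} (isV : O → Prop) (rc : O → O → Prop)
    (Inh : O → O → Prop) (e : O) : O → O → Prop :=
  fun a b => rc a b ∧ ((isV a ∧ Inh a e) ∨ (isV b ∧ Inh b e))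

theorem lpoLe_of_rc {O : Type} {rc ri : O → O → Prop} {a b : O} (h : rc a b) :
    lpoLe rc ri a b :=
  Relation.ReflTransGen.single (Or.inl h)

/-- Glue conditions recover inhibition ordering: if every
(a,b) ∈ glue(e) satisfies e ≤ a or b ≤ e, and every inhibiting vertex has some
incoming edge e' with e' →c v, then every inhibiting vertex is ordered with the
inhibited edge: e ≤ v or v ≤ e. -/
theorem stmt10 {O : Type} (isV isE : O → Prop) (rc ri : O → O → Prop)
    (Inh : O → O → Prop)
    (hin : ∀ v e, isV v → isE e → Inh v e → ∃ e', rc e' v)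
    (hglue : ∀ e, isE e → ∀ a b, glueOf isV rc Inh e a b →
      lpoLe rc ri e a ∨ lpoLe rc ri b e) :
    ∀ v e, isV v → isE e → Inh v e →
      lpoLe rc ri e v ∨ lpoLe rc ri v e := by
  intro v e hv he hInh
  obtain ⟨e', he'v⟩ := hin v e hv he hInh
  have hpair : glueOf isV rc Inh e e' v := ⟨he'v, Or.inr ⟨hv, hInh⟩⟩
  exact (hglue e he e' v hpair).imp_left fun hee' => hee'.trans (lpoLe_of_rc he'v)
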